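/- In the trading graph G constructed by the reduction from 3D-matching, any execution in which every X-cycle uses exactly one edge from E₀ and which contains k large X-cycles performs at most 8n − k exchanges, with equality if and only if it executes exactly n − k Y-cycles. -/

import Mathlib

structure TState (N M : Type) where
  own : N → Finset M
  dem : N → Finset M

variable {N M : Type} [DecidableEq N] [DecidableEq M]

/-- In a trading cycle `c = [(i₁,j₁),…,(i_k,j_k)]`, agent `i_t` receives item `j_t`;
`gives c` pairs each agent with the item he gives, namely `j_{t-1}` (cyclically). -/
def gives (c : List (N × M)) : List (N × M) :=
  (c.map Prod.fst).zip ((c.rotate (c.length - 1)).map Prod.snd)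

/-- A valid cycle step: nonempty, visits each agent and each item at most once,
every participating agent receives an item he currently demands and gives an item
he currently owns. -/
def ValidCycle (s : TState N M) (c : List (N × M)) : Prop :=
  c ≠ [] ∧ (c.map Prod.fst).Nodup ∧ (c.map Prod.snd).Nodup ∧
    (∀ p ∈ c, p.2 ∈ s.dem p.1) ∧ (∀ p ∈ gives c, p.2 ∈ s.own p.1)

/-- The state after executing a cycle: every used demand edge is reversed into a
supply edge (the received item moves into the agent's supply and leaves his demand),
and every used supply edge is removed. -/
def stepCycle (s : TState N M) (c : List (N × M)) : TState N M where
  own i := ((s.own i).filter fun j => (i, j) ∉ gives c) ∪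
      ((c.filter fun p => decide (p.1 = i)).map Prod.snd).toFinset
  dem i := (s.dem i).filter fun j => (i, j) ∉ c

/-- An execution is a sequence of cycle steps, each valid in the successively
updated state. -/
def ValidExec (s : TState N M) : List (List (N × M)) → Prop
  | [] => True
  | c :: r => ValidCycle s c ∧ ValidExec (stepCycle s c) r

/-- Total number of exchanges (items received) in an execution. -/
def exchanges (r : List (List (N × M))) : ℕ := (r.map List.length).sum

/-- Number of items agent `i` receives during execution `r`. -/
def receivedCount (r : List (List (N × M))) (i : N) : ℕ :=
  (r.map fun c => c.countP fun p => decide (p.1 = i)).sum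

/-- Number of items agent `i` gives during execution `r`. -/
def givenCount (r : List (List (N × M))) (i : N) : ℕ :=
  (r.map fun c => (gives c).countP fun p => decide (p.1 = i)).sum

/-- A static execution allocates each item at most once. -/
def StaticExec (r : List (List (N × M))) : Prop := (r.flatten.map Prod.snd).Nodup

/-- Agents of the reduction from 3D-matching: `ga t 0, ga t 1, ga t 2` are the
gadget agents `(xyz)₂, (xyz)₄, (xyz)₆` for the triple `t = (x,y,z)`; `ya y = y₂`,
`za z = z₁`, `xa1 x = x₁`, `xa3 x = x₃`. -/
inductive RAg (n : ℕ) where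
  | ga : (Fin n × Fin n × Fin n) → Fin 3 → RAg n
  | ya : Fin n → RAg n
  | za : Fin n → RAg n
  | xa1 : Fin n → RAg n
  | xa3 : Fin n → RAg n
deriving DecidableEq

/-- Items of the reduction: `gi t 0, gi t 1, gi t 2, gi t 3` are the gadget items
`(xyz)₁, (xyz)₃, (xyz)₅, (xyz)₇`; `yi y = y₁`, `zi z = z₂`, `xi x = x₂`. -/
inductive RIt (n : ℕ) where
  | gi : (Fin n × Fin n × Fin n) → Fin 4 → RIt n
  | yi : Fin n → RIt n
  | zi : Fin n → RIt n
  | xi : Fin n → RIt n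
deriving DecidableEq

/-- Supply sets of the reduction instance built from the triple set `T`. -/
def RS (n : ℕ) (T : Finset (Fin n × Fin n × Fin n)) : RAg n → Finset (RIt n)
  | .ga t i => if t ∈ T then {.gi t i.castSucc} else ∅
  | .ya y => {.yi y}
  | .za z => (T.filter fun t => t.2.2 = z).image fun t => .gi t 3
  | .xa1 _ => Finset.univ.image RIt.zi
  | .xa3 x => {.xi x}

/-- Demand sets of the reduction instance built from the triple set `T`. -/
def RD (n : ℕ) (T : Finset (Fin n × Fin n × Fin n)) : RAg n → Finset (RIt n)
  | .ga t i =>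
      if t ∈ T then
        (if i = 0 then {.gi t 1, .gi t 3}
         else if i = 1 then {.yi t.2.1}
         else {.gi t 3})
      else ∅
  | .ya y => (T.filter fun t => t.2.1 = y).image fun t => .gi t 2
  | .za z => {.zi z}
  | .xa1 x => {.xi x}
  | .xa3 x => (T.filter fun t => t.1 = x).image fun t => .gi t 0

/-- Whether a demand edge (agent receives item) belongs to the class
`E₀ = {(x₁, x₂)}`. -/
def isE0 {n : ℕ} : RAg n × RIt n → Bool
  | (.xa1 x, .xi x') => x == x'
  | _ => false

/-- Whether a demand edge belongs to the class `E₆ = {((xyz)₂, (xyz)₇)}`. -/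
def isE6 {n : ℕ} : RAg n × RIt n → Bool
  | (.ga t i, .gi t' j) => t == t' && i == 0 && j == 3
  | _ => false

/-- The number of large `X`-cycles in an execution: cycle steps using an `E₀` edge
but no `E₆` edge. -/
def numLarge {n : ℕ} (r : List (List (RAg n × RIt n))) : ℕ :=
  r.countP fun c => (c.countP isE0 != 0) && (c.countP isE6 == 0)

/-- The number of `Y`-cycles in an execution: cycle steps using no `E₀` edge. -/
def numY {n : ℕ} (r : List (List (RAg n × RIt n))) : ℕ :=
  r.countP fun c => c.countP isE0 == 0

/-- A set of triples is a partial 3D-matching: pairwise disjoint in each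
coordinate. -/
def IsPartialMatching {n : ℕ} (S : Finset (Fin n × Fin n × Fin n)) : Prop :=
  ∀ t ∈ S, ∀ t' ∈ S, t ≠ t' →
    t.1 ≠ t'.1 ∧ t.2.1 ≠ t'.2.1 ∧ t.2.2 ≠ t'.2.2

/-!
In every state reachable from the initial one, an agent owns only items it supplied initially or
demanded items it has already received. Hence consecutive edges of a trading cycle are
consecutive in the reduction graph (`CanFollow`), and following a cycle around shows that a
simple `X`-cycle is either the small 4-cycle through an `E₆` edge or the large 7-cycle, while a
`Y`-cycle is a 4-cycle in which `(xyz)₂` passes on the item `(xyz)₇` it received over an `E₆`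
edge. A demand edge is used at most once, so `small + large ≤ n`; an item that is not supplied
initially can be passed on only as often as it was received, so `Y ≤ small`. Together with
`exchanges = 4 small + 7 large + 4 Y` this gives both claims.
-/

open scoped Finset

namespace List

theorem perm_iterate_formPerm {α : Type*} [DecidableEq α] {l : List α} (hl : l.Nodup)
    {x : α} (hx : x ∈ l) {k : ℕ} (hk : 0 < k) (hkx : l.formPerm^[k] x = x)
    (hL : (iterate l.formPerm x k).Nodup) : l.Perm (iterate l.formPerm x k) := by
  obtain ⟨i, hi, rfl⟩ := getElem_of_mem hx
  have hpow (m : ℕ) : l.formPerm^[m] l[i] = l[(i + m) % l.length]'(Nat.mod_lt _ (by omega)) := by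
    rw [Equiv.Perm.iterate_eq_pow, formPerm_pow_apply_getElem _ hl]
  rw [hpow, hl.getElem_inj_iff] at hkx
  have hdvd : l.length ∣ k := by
    have : (i + k) % l.length = (i + 0) % l.length := by rw [hkx, Nat.add_zero, Nat.mod_eq_of_lt hi]
    exact (Nat.modEq_zero_iff_dvd).1 (Nat.ModEq.add_left_cancel' i this)
  have hsub : (iterate l.formPerm l[i] k).Subperm l :=
    subperm_of_subset hL fun y hy => by
      obtain ⟨m, -, rfl⟩ := mem_iterate.1 hy
      rw [hpow]; exact getElem_mem _
  refine (hsub.perm_of_length_le ?_).symm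
  rw [length_iterate]; exact Nat.le_of_dvd hk hdvd

theorem mem_of_formPerm_apply_eq {α : Type*} [DecidableEq α] {l : List α} {x y : α}
    (hx : x ∈ l) (h : l.formPerm x = y) : y ∈ l :=
  h ▸ formPerm_apply_mem_of_mem hx

theorem eq_of_countP_eq_one {α : Type*} {l : List α} {P : α → Bool} (h : l.countP P = 1)
    {a b : α} (ha : a ∈ l) (hb : b ∈ l) (hPa : P a) (hPb : P b) : a = b := by
  rw [countP_eq_length_filter, length_eq_one_iff] at h
  obtain ⟨x, hx⟩ := h
  have ha' : a ∈ l.filter P := mem_filter.2 ⟨ha, hPa⟩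
  have hb' : b ∈ l.filter P := mem_filter.2 ⟨hb, hPb⟩
  rw [hx, mem_singleton] at ha' hb'
  rw [ha', hb']

theorem Nodup.card_filter_mem {α : Type*} [DecidableEq α] {l : List α} (hl : l.Nodup)
    (E : Finset α) [DecidablePred (· ∈ l)] : #(E.filter (· ∈ l)) = l.countP (· ∈ E) := by
  rw [countP_eq_length_filter, ← toFinset_card_of_nodup (hl.filter _)]
  congr 1
  ext e
  simp [and_comm]

end List

theorem mem_gives_formPerm {c : List (N × M)} (hc : c.Nodup) {p : N × M} (hp : p ∈ c) :
    ((c.formPerm p).1, p.2) ∈ gives c := by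
  obtain ⟨i, hi, rfl⟩ := List.getElem_of_mem hp
  have hpos : 0 < c.length := by omega
  rw [List.formPerm_apply_getElem _ hc, List.mem_iff_getElem]
  refine ⟨(i + 1) % c.length, by simpa [gives] using Nat.mod_lt _ hpos, ?_⟩
  have hback : ((i + 1) % c.length + (c.length - 1)) % c.length = i := by
    rw [Nat.mod_add_mod, show i + 1 + (c.length - 1) = i + c.length by omega, Nat.add_mod_right,
      Nat.mod_eq_of_lt hi]
  simp [gives, List.getElem_rotate, hback]

theorem nodup_gives {α β : Type} {c : List (α × β)} (hc : (c.map Prod.fst).Nodup) :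
    (gives c).Nodup := by
  refine List.Nodup.of_map Prod.fst ?_
  rw [gives, List.map_fst_zip (by simp)]
  exact hc

def IsTradedFrom (s₀ s : TState N M) : Prop :=
  (∀ i, s.dem i ⊆ s₀.dem i) ∧ ∀ i, s.own i ⊆ s₀.own i ∪ (s₀.dem i \ s.dem i)

/-- The demand edge `q` can come right after the demand edge `p` in a cycle executed in a state
traded from `s₀`: the agent of `q` holds the item of `p`, either from the start or because it
received it, and then it no longer demands it. -/
def MayFollow (s₀ : TState N M) (p q : N × M) : Prop :=
  p.2 ∈ s₀.dem p.1 ∧ q.2 ∈ s₀.dem q.1 ∧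
    (p.2 ∈ s₀.own q.1 ∨ (p.2 ∈ s₀.dem q.1 ∧ q.1 ≠ p.1 ∧ q.2 ≠ p.2))

section Trading

variable {s₀ s : TState N M} {c : List (N × M)} {r : List (List (N × M))} {i : N} {j : M}

theorem mem_stepCycle_dem : j ∈ (stepCycle s c).dem i ↔ j ∈ s.dem i ∧ (i, j) ∉ c := by
  simp [stepCycle]

theorem mem_stepCycle_own :
    j ∈ (stepCycle s c).own i ↔ (j ∈ s.own i ∧ (i, j) ∉ gives c) ∨ (i, j) ∈ c := by
  simp only [stepCycle, Finset.mem_union, Finset.mem_filter, List.mem_toFinset, List.mem_map,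
    List.mem_filter, decide_eq_true_eq]
  constructor
  · rintro (h | ⟨p, ⟨hp, rfl⟩, rfl⟩)
    · exact Or.inl h
    · exact Or.inr hp
  · rintro (h | h)
    · exact Or.inl h
    · exact Or.inr ⟨(i, j), ⟨h, rfl⟩, rfl⟩

theorem isTradedFrom_refl {α β : Type} [DecidableEq β] {s : TState α β} : IsTradedFrom s s :=
  ⟨fun _ => subset_rfl, fun _ => Finset.subset_union_left⟩

theorem IsTradedFrom.stepCycle (hs : IsTradedFrom s₀ s) (hc : ValidCycle s c) :
    IsTradedFrom s₀ (stepCycle s c) := by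
  refine ⟨fun i j hj => hs.1 i (mem_stepCycle_dem.1 hj).1, fun i j hj => ?_⟩
  simp only [Finset.mem_union, Finset.mem_sdiff, mem_stepCycle_dem, not_and, not_not]
  rcases mem_stepCycle_own.1 hj with ⟨hj, -⟩ | hj
  · have := hs.2 i hj
    simp only [Finset.mem_union, Finset.mem_sdiff] at this
    tauto
  · obtain ⟨-, -, -, hdem, -⟩ := hc
    exact Or.inr ⟨hs.1 i (hdem _ hj), fun _ => hj⟩

theorem IsTradedFrom.mayFollow (hs : IsTradedFrom s₀ s) (hc : ValidCycle s c) {p : N × M}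
    (hp : p ∈ c) : MayFollow s₀ p (c.formPerm p) := by
  obtain ⟨-, -, hsnd, hdem, hown⟩ := hc
  have hq := hdem _ (List.formPerm_apply_mem_of_mem hp)
  refine ⟨hs.1 _ (hdem p hp), hs.1 _ hq, ?_⟩
  have := hs.2 _ (hown _ (mem_gives_formPerm (hsnd.of_map _) hp))
  rcases Finset.mem_union.1 this with h | h
  · exact Or.inl h
  · obtain ⟨h, hnot⟩ := Finset.mem_sdiff.1 h
    exact Or.inr ⟨h, fun he => hnot (he ▸ hdem p hp), fun he => hnot (he ▸ hq)⟩

theorem ValidExec.exists_isTradedFrom (hs : IsTradedFrom s₀ s) (hr : ValidExec s r)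
    (hc : c ∈ r) : ∃ s', IsTradedFrom s₀ s' ∧ ValidCycle s' c := by
  induction r generalizing s with
  | nil => simp at hc
  | cons c' r ih =>
    obtain ⟨hc', hr⟩ := hr
    rcases List.mem_cons.1 hc with rfl | hc
    · exact ⟨s, hs, hc'⟩
    · exact ih (hs.stepCycle hc') hr hc

end Trading

def TState.demanded (s : TState N M) (E : Finset (N × M)) : Finset (N × M) :=
  E.filter fun e => e.2 ∈ s.dem e.1

def TState.owned (s : TState N M) (E : Finset (N × M)) : Finset (N × M) :=
  E.filter fun e => e.2 ∈ s.own e.1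

section Potentials

variable {s : TState N M} {c : List (N × M)} {r : List (List (N × M))} (E : Finset (N × M))

theorem ValidCycle.card_demanded_stepCycle (hc : ValidCycle s c) :
    #((stepCycle s c).demanded E) + c.countP (· ∈ E) = #(s.demanded E) := by
  obtain ⟨-, -, hsnd, hdem, -⟩ := hc
  have hstep : (stepCycle s c).demanded E = (s.demanded E).filter (· ∉ c) := by
    ext e; simp [TState.demanded, mem_stepCycle_dem, and_assoc]
  have hused : (s.demanded E).filter (· ∈ c) = E.filter (· ∈ c) := by
    ext e
    simp only [TState.demanded, Finset.mem_filter]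
    exact ⟨fun h => ⟨h.1.1, h.2⟩, fun h => ⟨⟨h.1, hdem e h.2⟩, h.2⟩⟩
  have hsplit := Finset.card_filter_add_card_filter_not (s := s.demanded E) (· ∈ c)
  rw [hused, (hsnd.of_map _).card_filter_mem] at hsplit
  rw [hstep]
  omega

theorem ValidCycle.card_owned_stepCycle_le (hc : ValidCycle s c) :
    #((stepCycle s c).owned E) + (gives c).countP (· ∈ E) ≤ #(s.owned E) + c.countP (· ∈ E) := by
  obtain ⟨-, hfst, hsnd, -, hown⟩ := hc
  have hstep : (stepCycle s c).owned E ⊆ (s.owned E).filter (· ∉ gives c) ∪ E.filter (· ∈ c) := by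
    intro e he
    simp only [TState.owned, Finset.mem_filter, Finset.mem_union, mem_stepCycle_own] at he ⊢
    tauto
  have hgiven : (s.owned E).filter (· ∈ gives c) = E.filter (· ∈ gives c) := by
    ext e
    simp only [TState.owned, Finset.mem_filter]
    exact ⟨fun h => ⟨h.1.1, h.2⟩, fun h => ⟨⟨h.1, hown e h.2⟩, h.2⟩⟩
  have hsplit := Finset.card_filter_add_card_filter_not (s := s.owned E) (· ∈ gives c)
  rw [hgiven, (nodup_gives hfst).card_filter_mem] at hsplit
  have hrecv := (hsnd.of_map _).card_filter_mem E
  have := (Finset.card_le_card hstep).trans (Finset.card_union_le _ _)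
  omega

theorem ValidExec.countP_flatten_le (hr : ValidExec s r) :
    r.flatten.countP (· ∈ E) ≤ #(s.demanded E) := by
  induction r generalizing s with
  | nil => simp
  | cons c r ih =>
    have := hr.1.card_demanded_stepCycle E
    have := ih hr.2
    simp only [List.flatten_cons, List.countP_append]
    omega

theorem ValidExec.countP_flatMap_gives_le (hr : ValidExec s r) :
    (r.flatMap gives).countP (· ∈ E) ≤ #(s.owned E) + r.flatten.countP (· ∈ E) := by
  induction r generalizing s with
  | nil => simp
  | cons c r ih =>
    have := hr.1.card_owned_stepCycle_le E
    have := ih hr.2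
    simp only [List.flatMap_cons, List.flatten_cons, List.countP_append]
    omega

end Potentials

section Reduction

variable {n : ℕ}

/-- The demand edges of the reduction instance (for any `T`) that can come right after a given
one in a trading cycle. -/
inductive CanFollow : RAg n × RIt n → RAg n × RIt n → Prop
  | xa1_xa3 {x : Fin n} {t} : CanFollow (.xa1 x, .xi x) (.xa3 x, .gi t 0)
  | xa3_ga01 {x : Fin n} {t} : CanFollow (.xa3 x, .gi t 0) (.ga t 0, .gi t 1)
  | xa3_ga03 {x : Fin n} {t} : CanFollow (.xa3 x, .gi t 0) (.ga t 0, .gi t 3)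
  | ga01_ga1 {t} : CanFollow (.ga t 0, .gi t 1) (.ga t 1, .yi t.2.1)
  | ga03_za {t} : CanFollow (.ga t 0, .gi t 3) (.za t.2.2, .zi t.2.2)
  | ga1_ya {t t' : Fin n × Fin n × Fin n} {y : Fin n} :
      t'.2.1 = y → CanFollow (.ga t 1, .yi y) (.ya y, .gi t' 2)
  | ya_ga2 {y : Fin n} {t} : CanFollow (.ya y, .gi t 2) (.ga t 2, .gi t 3)
  | ga2_za {t} : CanFollow (.ga t 2, .gi t 3) (.za t.2.2, .zi t.2.2)
  | ga2_ga01 {t} : CanFollow (.ga t 2, .gi t 3) (.ga t 0, .gi t 1)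
  | za_xa1 {z x : Fin n} : CanFollow (.za z, .zi z) (.xa1 x, .xi x)

theorem mem_RD_cases {T : Finset (Fin n × Fin n × Fin n)} {p : RAg n × RIt n}
    (h : p.2 ∈ RD n T p.1) :
    (∃ x, p = (.xa1 x, .xi x)) ∨ (∃ t, p = (.xa3 t.1, .gi t 0)) ∨
    (∃ t, p = (.ga t 0, .gi t 1)) ∨ (∃ t, p = (.ga t 0, .gi t 3)) ∨
    (∃ t, p = (.ga t 1, .yi t.2.1)) ∨ (∃ t, p = (.ya t.2.1, .gi t 2)) ∨
    (∃ t, p = (.ga t 2, .gi t 3)) ∨ (∃ z, p = (.za z, .zi z)) := by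
  obtain ⟨i, j⟩ := p
  cases i with
  | ga t k => fin_cases k <;> by_cases ht : t ∈ T <;> simp [RD, ht] at h <;> simp [h]
  | _ => simp [RD] at h; aesop

theorem canFollow_of_mayFollow {T : Finset (Fin n × Fin n × Fin n)} {p q : RAg n × RIt n}
    (h : MayFollow ⟨RS n T, RD n T⟩ p q) : CanFollow p q := by
  obtain ⟨hp, hq, h⟩ := h
  -- a finite check over the `8 × 8` shapes of pairs of demand edges
  rcases mem_RD_cases hp with ⟨_, rfl⟩ | ⟨_, rfl⟩ | ⟨_, rfl⟩ | ⟨_, rfl⟩ | ⟨_, rfl⟩ | ⟨_, rfl⟩ |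
    ⟨_, rfl⟩ | ⟨_, rfl⟩ <;>
  rcases mem_RD_cases hq with ⟨_, rfl⟩ | ⟨_, rfl⟩ | ⟨_, rfl⟩ | ⟨_, rfl⟩ | ⟨_, rfl⟩ | ⟨_, rfl⟩ |
    ⟨_, rfl⟩ | ⟨_, rfl⟩ <;>
  simp [RS, RD, mem_ite] at h <;>
  grind [CanFollow]

section Inversion

variable {q : RAg n × RIt n} {t : Fin n × Fin n × Fin n} {x y z : Fin n}

theorem CanFollow.from_xa1 (h : CanFollow (.xa1 x, .xi x) q) : ∃ t, q = (.xa3 x, .gi t 0) := by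
  cases h; exact ⟨_, rfl⟩

theorem CanFollow.from_xa3 (h : CanFollow (.xa3 x, .gi t 0) q) :
    q = (.ga t 0, .gi t 1) ∨ q = (.ga t 0, .gi t 3) := by
  cases h <;> simp

theorem CanFollow.from_ga01 (h : CanFollow (.ga t 0, .gi t 1) q) : q = (.ga t 1, .yi t.2.1) := by
  cases h; rfl

theorem CanFollow.from_ga03 (h : CanFollow (.ga t 0, .gi t 3) q) :
    q = (.za t.2.2, .zi t.2.2) := by
  cases h; rfl

theorem CanFollow.from_ga1 (h : CanFollow (.ga t 1, .yi y) q) :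
    ∃ t', t'.2.1 = y ∧ q = (.ya y, .gi t' 2) := by
  cases h; exact ⟨_, by assumption, rfl⟩

theorem CanFollow.from_ya (h : CanFollow (.ya y, .gi t 2) q) : q = (.ga t 2, .gi t 3) := by
  cases h; rfl

theorem CanFollow.from_ga2 (h : CanFollow (.ga t 2, .gi t 3) q) :
    q = (.za t.2.2, .zi t.2.2) ∨ q = (.ga t 0, .gi t 1) := by
  cases h <;> simp

theorem CanFollow.from_za (h : CanFollow (.za z, .zi z) q) : ∃ x, q = (.xa1 x, .xi x) := by
  cases h; exact ⟨_, rfl⟩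

end Inversion

def IsReductionCycle (c : List (RAg n × RIt n)) : Prop :=
  c ≠ [] ∧ (c.map Prod.snd).Nodup ∧ ∀ p ∈ c, CanFollow p (c.formPerm p)

theorem IsTradedFrom.isReductionCycle {T : Finset (Fin n × Fin n × Fin n)}
    {s : TState (RAg n) (RIt n)} {c : List (RAg n × RIt n)}
    (hs : IsTradedFrom ⟨RS n T, RD n T⟩ s) (hc : ValidCycle s c) : IsReductionCycle c :=
  ⟨hc.1, hc.2.2.1, fun _ hp => canFollow_of_mayFollow (hs.mayFollow hc hp)⟩

def smallXCycle (x : Fin n) (t : Fin n × Fin n × Fin n) : List (RAg n × RIt n) :=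
  [(.xa1 x, .xi x), (.xa3 x, .gi t 0), (.ga t 0, .gi t 3), (.za t.2.2, .zi t.2.2)]

def largeXCycle (x : Fin n) (t t' : Fin n × Fin n × Fin n) : List (RAg n × RIt n) :=
  [(.xa1 x, .xi x), (.xa3 x, .gi t 0), (.ga t 0, .gi t 1), (.ga t 1, .yi t.2.1),
    (.ya t.2.1, .gi t' 2), (.ga t' 2, .gi t' 3), (.za t'.2.2, .zi t'.2.2)]

def yCycle (t : Fin n × Fin n × Fin n) : List (RAg n × RIt n) :=
  [(.ga t 2, .gi t 3), (.ga t 0, .gi t 1), (.ga t 1, .yi t.2.1), (.ya t.2.1, .gi t 2)]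

theorem isE0_iff {p : RAg n × RIt n} : isE0 p = true ↔ ∃ x, p = (.xa1 x, .xi x) := by
  obtain ⟨a, b⟩ := p
  cases a <;> cases b <;> simp [isE0]
  exact eq_comm

theorem isE6_iff {p : RAg n × RIt n} : isE6 p = true ↔ ∃ t, p = (.ga t 0, .gi t 3) := by
  refine ⟨fun h => ?_, by rintro ⟨t, rfl⟩; simp [isE6]⟩
  obtain ⟨a, b⟩ := p
  cases a <;> cases b <;> simp [isE6] at h
  obtain ⟨⟨rfl, rfl⟩, rfl⟩ := h
  exact ⟨_, rfl⟩

namespace IsReductionCycle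

variable {c : List (RAg n × RIt n)} {t t' : Fin n × Fin n × Fin n}

theorem nodup (hc : IsReductionCycle c) : c.Nodup := hc.2.1.of_map _

theorem canFollow (hc : IsReductionCycle c) {p : RAg n × RIt n} (hp : p ∈ c) :
    CanFollow p (c.formPerm p) :=
  hc.2.2 p hp

theorem eq_of_formPerm_ga2 (hc : IsReductionCycle c) (h1 : (.ga t 1, .yi t.2.1) ∈ c)
    (h2 : (.ga t' 2, .gi t' 3) ∈ c) (hty : t'.2.1 = t.2.1)
    (e : c.formPerm (.ga t' 2, .gi t' 3) = (.ga t' 0, .gi t' 1)) : t' = t := by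
  have m := List.mem_of_formPerm_apply_eq h2 e
  have m' := List.mem_of_formPerm_apply_eq m (hc.canFollow m).from_ga01
  have := List.inj_on_of_nodup_map hc.2.1 m' h1 (by simp [hty])
  simp only [Prod.mk.injEq, RAg.ga.injEq] at this
  exact this.1.1

theorem formPerm_za_eq (hc : IsReductionCycle c) (h1 : c.countP isE0 = 1) {x z : Fin n}
    (hx : (.xa1 x, .xi x) ∈ c) (hz : (.za z, .zi z) ∈ c) :
    c.formPerm (.za z, .zi z) = (.xa1 x, .xi x) := by
  obtain ⟨x', e⟩ := (hc.canFollow hz).from_za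
  rw [e]
  exact List.eq_of_countP_eq_one h1 (List.mem_of_formPerm_apply_eq hz e) hx (by simp [isE0])
    (by simp [isE0])

theorem perm_smallXCycle (hc : IsReductionCycle c) (h1 : c.countP isE0 = 1) {x : Fin n}
    (m₀ : (.xa1 x, .xi x) ∈ c) (e₁ : c.formPerm (.xa1 x, .xi x) = (.xa3 x, .gi t 0))
    (e₂ : c.formPerm (.xa3 x, .gi t 0) = (.ga t 0, .gi t 3)) : c.Perm (smallXCycle x t) := by
  have m₂ := List.mem_of_formPerm_apply_eq (List.mem_of_formPerm_apply_eq m₀ e₁) e₂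
  have e₃ := (hc.canFollow m₂).from_ga03
  have e₄ := hc.formPerm_za_eq h1 m₀ (List.mem_of_formPerm_apply_eq m₂ e₃)
  have := List.perm_iterate_formPerm hc.nodup m₀ (k := 4) (by norm_num)
    (by simp [Function.iterate_succ_apply, e₁, e₂, e₃, e₄])
    (by simp [List.iterate, e₁, e₂, e₃])
  simpa [List.iterate, e₁, e₂, e₃, smallXCycle] using this

theorem exists_perm_largeXCycle (hc : IsReductionCycle c) (h1 : c.countP isE0 = 1) {x : Fin n}
    (m₀ : (.xa1 x, .xi x) ∈ c) (e₁ : c.formPerm (.xa1 x, .xi x) = (.xa3 x, .gi t 0))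
    (e₂ : c.formPerm (.xa3 x, .gi t 0) = (.ga t 0, .gi t 1)) :
    ∃ t', c.Perm (largeXCycle x t t') := by
  have m₁ := List.mem_of_formPerm_apply_eq m₀ e₁
  have m₂ := List.mem_of_formPerm_apply_eq m₁ e₂
  have e₃ := (hc.canFollow m₂).from_ga01
  have m₃ := List.mem_of_formPerm_apply_eq m₂ e₃
  obtain ⟨t', hty, e₄⟩ := (hc.canFollow m₃).from_ga1
  have m₄ := List.mem_of_formPerm_apply_eq m₃ e₄
  have e₅ := (hc.canFollow m₄).from_ya
  have m₅ := List.mem_of_formPerm_apply_eq m₄ e₅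
  rcases (hc.canFollow m₅).from_ga2 with e₆ | e₆
  · have e₇ := hc.formPerm_za_eq h1 m₀ (List.mem_of_formPerm_apply_eq m₅ e₆)
    refine ⟨t', ?_⟩
    have := List.perm_iterate_formPerm hc.nodup m₀ (k := 7) (by norm_num)
      (by simp [Function.iterate_succ_apply, e₁, e₂, e₃, e₄, e₅, e₆, e₇])
      (by simp [List.iterate, e₁, e₂, e₃, e₄, e₅, e₆])
    simpa [List.iterate, e₁, e₂, e₃, e₄, e₅, e₆, largeXCycle] using this
  · -- closing a `Y`-cycle here would give the edge `(ga t 0, gi t 1)` two predecessors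
    obtain rfl := hc.eq_of_formPerm_ga2 m₃ m₅ hty e₆
    have := c.formPerm.injective (e₆.trans e₂.symm)
    simp at this

theorem exists_perm_smallXCycle_or_largeXCycle (hc : IsReductionCycle c)
    (h1 : c.countP isE0 = 1) :
    (∃ x t, c.Perm (smallXCycle x t)) ∨ ∃ x t t', c.Perm (largeXCycle x t t') := by
  obtain ⟨p₀, m₀, hp₀⟩ := List.countP_pos_iff.1 (h1 ▸ Nat.one_pos)
  obtain ⟨x, rfl⟩ := isE0_iff.1 hp₀
  obtain ⟨t, e₁⟩ := (hc.canFollow m₀).from_xa1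
  rcases (hc.canFollow (List.mem_of_formPerm_apply_eq m₀ e₁)).from_xa3 with e₂ | e₂
  · exact Or.inr ⟨x, t, hc.exists_perm_largeXCycle h1 m₀ e₁ e₂⟩
  · exact Or.inl ⟨x, t, hc.perm_smallXCycle h1 m₀ e₁ e₂⟩

theorem not_mem_xa1 (h0 : c.countP isE0 = 0) {x : Fin n} : (.xa1 x, .xi x) ∉ c :=
  fun hm => by simpa [isE0] using List.countP_eq_zero.1 h0 _ hm

theorem not_mem_za (hc : IsReductionCycle c) (h0 : c.countP isE0 = 0) {z : Fin n} :
    (.za z, .zi z) ∉ c := fun hm => by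
  obtain ⟨x, e⟩ := (hc.canFollow hm).from_za
  exact not_mem_xa1 h0 (List.mem_of_formPerm_apply_eq hm e)

theorem exists_ga2_mem (hc : IsReductionCycle c) (h0 : c.countP isE0 = 0) :
    ∃ t, (.ga t 2, .gi t 3) ∈ c := by
  have of_ya {y t} (hm : (.ya y, .gi t 2) ∈ c) : ∃ t, (.ga t 2, .gi t 3) ∈ c :=
    ⟨t, List.mem_of_formPerm_apply_eq hm (hc.canFollow hm).from_ya⟩
  have of_ga1 {t y} (hm : (.ga t 1, .yi y) ∈ c) : ∃ t, (.ga t 2, .gi t 3) ∈ c := by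
    obtain ⟨_, -, e⟩ := (hc.canFollow hm).from_ga1
    exact of_ya (List.mem_of_formPerm_apply_eq hm e)
  have of_ga01 {t} (hm : (.ga t 0, .gi t 1) ∈ c) : ∃ t, (.ga t 2, .gi t 3) ∈ c :=
    of_ga1 (List.mem_of_formPerm_apply_eq hm (hc.canFollow hm).from_ga01)
  have not_ga03 {t} (hm : (.ga t 0, .gi t 3) ∈ c) : False :=
    hc.not_mem_za h0 (List.mem_of_formPerm_apply_eq hm (hc.canFollow hm).from_ga03)
  obtain ⟨p, hp⟩ := List.exists_mem_of_ne_nil c hc.1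
  have h := hc.canFollow hp
  generalize c.formPerm p = q at h
  cases h with
  | xa1_xa3 => exact absurd hp (not_mem_xa1 h0)
  | xa3_ga01 | xa3_ga03 =>
    rcases (hc.canFollow hp).from_xa3 with e | e
    · exact of_ga01 (List.mem_of_formPerm_apply_eq hp e)
    · exact (not_ga03 (List.mem_of_formPerm_apply_eq hp e)).elim
  | ga01_ga1 => exact of_ga01 hp
  | ga03_za => exact (not_ga03 hp).elim
  | ga1_ya => exact of_ga1 hp
  | ya_ga2 => exact of_ya hp
  | ga2_za | ga2_ga01 => exact ⟨_, hp⟩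
  | za_xa1 => exact absurd hp (hc.not_mem_za h0)

theorem exists_perm_yCycle (hc : IsReductionCycle c) (h0 : c.countP isE0 = 0) :
    ∃ t, c.Perm (yCycle t) ∧ (.ga t 0, .gi t 3) ∈ gives c := by
  obtain ⟨t, m₀⟩ := hc.exists_ga2_mem h0
  rcases (hc.canFollow m₀).from_ga2 with e₁ | e₁
  · exact absurd (List.mem_of_formPerm_apply_eq m₀ e₁) (hc.not_mem_za h0)
  have m₁ := List.mem_of_formPerm_apply_eq m₀ e₁
  have e₂ := (hc.canFollow m₁).from_ga01
  have m₂ := List.mem_of_formPerm_apply_eq m₁ e₂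
  obtain ⟨t', hty, e₃⟩ := (hc.canFollow m₂).from_ga1
  have m₃ := List.mem_of_formPerm_apply_eq m₂ e₃
  have e₄ := (hc.canFollow m₃).from_ya
  have m₄ := List.mem_of_formPerm_apply_eq m₃ e₄
  rcases (hc.canFollow m₄).from_ga2 with e₅ | e₅
  · exact absurd (List.mem_of_formPerm_apply_eq m₄ e₅) (hc.not_mem_za h0)
  obtain rfl := hc.eq_of_formPerm_ga2 m₂ m₄ hty e₅
  refine ⟨t', ?_, by simpa [e₁] using mem_gives_formPerm hc.nodup m₀⟩
  have := List.perm_iterate_formPerm hc.nodup m₀ (k := 4) (by norm_num)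
    (by simp [Function.iterate_succ_apply, e₁, e₂, e₃, e₄])
    (by simp [List.iterate, e₁, e₂, e₃])
  simpa [List.iterate, e₁, e₂, e₃, yCycle] using this

theorem counts_cases (hc : IsReductionCycle c) (hs : c.countP isE0 ≠ 0 → c.countP isE0 = 1) :
    (c.countP isE0 = 1 ∧ c.countP isE6 = 1 ∧ c.length = 4) ∨
    (c.countP isE0 = 1 ∧ c.countP isE6 = 0 ∧ c.length = 7) ∨
    (c.countP isE0 = 0 ∧ c.countP isE6 = 0 ∧ c.length = 4 ∧ 0 < (gives c).countP isE6) := by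
  by_cases h0 : c.countP isE0 = 0
  · obtain ⟨t, hp, hg⟩ := hc.exists_perm_yCycle h0
    refine Or.inr (Or.inr ⟨h0, ?_, hp.length_eq, List.countP_pos_iff.2 ⟨_, hg, by simp [isE6]⟩⟩)
    rw [hp.countP_eq]; simp [yCycle, isE6]
  · rcases hc.exists_perm_smallXCycle_or_largeXCycle (hs h0) with ⟨x, t, hp⟩ | ⟨x, t, t', hp⟩
    · refine Or.inl ⟨hs h0, ?_, hp.length_eq⟩
      rw [hp.countP_eq]; simp [smallXCycle, isE6]
    · refine Or.inr (Or.inl ⟨hs h0, ?_, hp.length_eq⟩)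
      rw [hp.countP_eq]; simp [largeXCycle, isE6]

end IsReductionCycle

end Reduction

section ReductionCounting

variable {n : ℕ} {T : Finset (Fin n × Fin n × Fin n)} {r : List (List (RAg n × RIt n))}

def numSmall (r : List (List (RAg n × RIt n))) : ℕ :=
  r.countP fun c => (c.countP isE0 != 0) && (c.countP isE6 != 0)

theorem counts_of_forall_isReductionCycle (hr : ∀ c ∈ r, IsReductionCycle c)
    (hs : ∀ c ∈ r, c.countP isE0 ≠ 0 → c.countP isE0 = 1) :
    exchanges r = 4 * numSmall r + 7 * numLarge r + 4 * numY r ∧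
    r.flatten.countP isE0 = numSmall r + numLarge r ∧
    r.flatten.countP isE6 = numSmall r ∧
    numY r ≤ (r.flatMap gives).countP isE6 := by
  induction r with
  | nil => simp [exchanges, numSmall, numLarge, numY]
  | cons c r ih =>
    obtain ⟨hE, h0, h6, hY⟩ := ih (fun c hc => hr c (List.mem_cons_of_mem _ hc))
      (fun c hc => hs c (List.mem_cons_of_mem _ hc))
    simp only [exchanges, numSmall, numLarge, numY] at hE h0 h6 hY ⊢
    rcases (hr c List.mem_cons_self).counts_cases (hs c List.mem_cons_self) with
      ⟨c0, c6, cl⟩ | ⟨c0, c6, cl⟩ | ⟨c0, c6, cl, cg⟩ <;>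
    simp only [List.countP_cons, List.flatten_cons, List.flatMap_cons, List.countP_append,
      List.map_cons, List.sum_cons, c0, c6, cl, Nat.reduceBNe, Nat.reduceBEq, Bool.and_self,
      Bool.and_false, Bool.and_true, Bool.false_eq_true, ↓reduceIte] <;> omega

def e0Edges (n : ℕ) : Finset (RAg n × RIt n) :=
  Finset.univ.image fun x => (.xa1 x, .xi x)

def e6Edges (n : ℕ) : Finset (RAg n × RIt n) :=
  Finset.univ.image fun t => (.ga t 0, .gi t 3)

theorem countP_isE0_eq (l : List (RAg n × RIt n)) : l.countP isE0 = l.countP (· ∈ e0Edges n) :=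
  List.countP_congr fun p _ => by
    simp only [isE0_iff, e0Edges, decide_eq_true_iff, Finset.mem_image, Finset.mem_univ, true_and]
    exact exists_congr fun _ => eq_comm

theorem countP_isE6_eq (l : List (RAg n × RIt n)) : l.countP isE6 = l.countP (· ∈ e6Edges n) :=
  List.countP_congr fun p _ => by
    simp only [isE6_iff, e6Edges, decide_eq_true_iff, Finset.mem_image, Finset.mem_univ, true_and]
    exact exists_congr fun _ => eq_comm

theorem ValidExec.countP_isE0_le (hr : ValidExec ⟨RS n T, RD n T⟩ r) :
    r.flatten.countP isE0 ≤ n := by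
  rw [countP_isE0_eq]
  calc _ ≤ #((⟨RS n T, RD n T⟩ : TState _ _).demanded (e0Edges n)) := hr.countP_flatten_le _
    _ ≤ #(e0Edges n) := Finset.card_filter_le _ _
    _ ≤ n := Finset.card_image_le.trans (by simp)

theorem ValidExec.countP_gives_isE6_le (hr : ValidExec ⟨RS n T, RD n T⟩ r) :
    (r.flatMap gives).countP isE6 ≤ r.flatten.countP isE6 := by
  have hnone : (⟨RS n T, RD n T⟩ : TState _ _).owned (e6Edges n) = ∅ := by
    rw [TState.owned, Finset.filter_eq_empty_iff]
    rintro _ he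
    obtain ⟨t, -, rfl⟩ := Finset.mem_image.1 he
    simp only [RS]
    split_ifs <;> simp
  have := hr.countP_flatMap_gives_le (e6Edges n)
  rwa [hnone, Finset.card_empty, zero_add, ← countP_isE6_eq, ← countP_isE6_eq] at this

end ReductionCounting

/-- In the reduction trading graph, any execution in which every
`X`-cycle uses exactly one `E₀` edge and which contains `k` large `X`-cycles
performs at most `8n − k` exchanges, with equality iff it executes exactly `n − k`
`Y`-cycles. -/
theorem stmt13 (n : ℕ) (T : Finset (Fin n × Fin n × Fin n))
    (r : List (List (RAg n × RIt n))) (hr : ValidExec ⟨RS n T, RD n T⟩ r)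
    (hsimple : ∀ c ∈ r, c.countP isE0 ≠ 0 → c.countP isE0 = 1) :
    exchanges r ≤ 8 * n - numLarge r ∧
    (exchanges r = 8 * n - numLarge r ↔ numY r = n - numLarge r) := by
  have hcycles : ∀ c ∈ r, IsReductionCycle c := fun c hc => by
    obtain ⟨s, hs, hvalid⟩ := hr.exists_isTradedFrom isTradedFrom_refl hc
    exact hs.isReductionCycle hvalid
  obtain ⟨hE, h0, h6, hY⟩ := counts_of_forall_isReductionCycle hcycles hsimple
  have hX : numSmall r + numLarge r ≤ n := h0 ▸ hr.countP_isE0_le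
  have hYS : numY r ≤ numSmall r := hY.trans (h6 ▸ hr.countP_gives_isE6_le)
  omega
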